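/- arXiv:1410.7981 — 3 statements merged into one kernel-verified Lean document; each statement's English description precedes it below -/
import Mathlib

section
/- Conversely, let w ∈ S_∞ and p < q with w(p) < w(q), and suppose there is no r with p < r < q and w(p) < w(r) < w(q). Then ℓ(w·t_{pq}) = ℓ(w) + 1. -/
/-!
Write `t = t_{pq}` and call `(i, j)` with `i < j` and `w j < w i` an inversion of `w`. The map on
pairs of positions that applies `t` to both entries, except on pairs lying inside `[p, q]`, is an
involution, and it carries the inversions of `w·t` onto the inversions of `w` together with `(p, q)`.
Outside `[p, q]` this holds because `t` then preserves the order of the two positions. Inside, the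
pair `(p, q)` is the new inversion, and for `p < r < q` the hypothesis that `w r` is not strictly
between `w p` and `w q` makes `(p, r)` and `(r, q)` inversions of `w·t` exactly when they are
inversions of `w`.
-/

/-- `S_∞`: a permutation of `ℕ` has finite support. -/
def FinSupp (w : Equiv.Perm ℕ) : Prop := ∃ N, ∀ i, N ≤ i → w i = i

/-- The inversion number `ℓ(w) = #{i < j : w(i) > w(j)}`. -/
noncomputable def ell (w : Equiv.Perm ℕ) : ℕ := Set.ncard {p : ℕ × ℕ | p.1 < p.2 ∧ w p.2 < w p.1}

def inversions (w : Equiv.Perm ℕ) : Set (ℕ × ℕ) := {x | x.1 < x.2 ∧ w x.2 < w x.1}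

theorem ell_eq_ncard_inversions (w : Equiv.Perm ℕ) : ell w = (inversions w).ncard := rfl

theorem inversions_subset_Iio_prod_Iio {w : Equiv.Perm ℕ} {N : ℕ} (hN : ∀ i, N ≤ i → w i = i) :
    inversions w ⊆ Set.Iio N ×ˢ Set.Iio N := by
  have maps_Iio : ∀ i < N, w i < N := fun i hi => by
    by_contra! hwi
    have := w.injective (hN _ hwi)
    omega
  rintro ⟨i, j⟩ ⟨hij, hinv⟩
  dsimp only at hij hinv
  have hjN : j < N := by
    by_contra! hj
    rw [hN j hj] at hinv
    rcases lt_or_ge i N with hi | hi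
    · have := maps_Iio i hi
      omega
    · rw [hN i hi] at hinv
      omega
  exact ⟨hij.trans hjN, hjN⟩

theorem FinSupp.inversions_finite {w : Equiv.Perm ℕ} (hs : FinSupp w) : (inversions w).Finite := by
  obtain ⟨N, hN⟩ := hs
  exact ((Set.finite_Iio N).prod (Set.finite_Iio N)).subset (inversions_subset_Iio_prod_Iio hN)

def swapOutside (p q : ℕ) (x : ℕ × ℕ) : ℕ × ℕ :=
  if x.1 < p ∨ q < x.2 then Prod.map (Equiv.swap p q) (Equiv.swap p q) x else x

theorem swapOutside_involutive {p q : ℕ} (hpq : p < q) : Function.Involutive (swapOutside p q) := by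
  rintro ⟨i, j⟩
  unfold swapOutside
  split_ifs <;> simp_all [Equiv.swap_apply_def] <;> split_ifs at * <;> omega

theorem mem_inversions_mul_swap_iff {w : Equiv.Perm ℕ} {p q : ℕ} (hpq : p < q) (hw : w p < w q)
    (h : ¬ ∃ r, p < r ∧ r < q ∧ w p < w r ∧ w r < w q) (x : ℕ × ℕ) :
    x ∈ inversions (w * Equiv.swap p q) ↔
      swapOutside p q x = (p, q) ∨ swapOutside p q x ∈ inversions w := by
  obtain ⟨i, j⟩ := x
  simp only [inversions, swapOutside, Set.mem_ofPred_eq, Equiv.Perm.mul_apply, Prod.map,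
    Equiv.swap_apply_def]
  split_ifs <;> grind [w.injective]

/-- If `p < q`, `w(p) < w(q)` and there is no `r` with `p < r < q` and
`w(p) < w(r) < w(q)`, then `ℓ(w·t_{pq}) = ℓ(w) + 1`. -/
theorem stmt3 (w : Equiv.Perm ℕ) (hs : FinSupp w) (p q : ℕ) (hpq : p < q)
    (hw : w p < w q)
    (h : ¬ ∃ r, p < r ∧ r < q ∧ w p < w r ∧ w r < w q) :
    ell (w * Equiv.swap p q) = ell w + 1 := by
  have hσ := swapOutside_involutive hpq
  have hpre : inversions (w * Equiv.swap p q) = swapOutside p q ⁻¹' insert (p, q) (inversions w) :=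
    Set.ext (mem_inversions_mul_swap_iff hpq hw h)
  have hpq_notMem : (p, q) ∉ inversions w := fun hmem => hw.not_gt hmem.2
  rw [ell_eq_ncard_inversions, ell_eq_ncard_inversions, hpre,
    Set.ncard_preimage_of_injective_subset_range hσ.injective
      (hσ.surjective.range_eq ▸ Set.subset_univ _),
    Set.ncard_insert_of_notMem hpq_notMem hs.inversions_finite]
end

section
/- Let w ∈ S_∞, p ≤ ν < q and p' ≤ ν < q' with ℓ(w·t_{pq}) = ℓ(w) + 1 and ℓ(w·t_{p'q'}) = ℓ(w) + 1. If it is not the case that (q' < q and w(q') > w(p)) and not the case that (p' < q and w(p') > w(p)) — i.e. p', q' ∉ {r : r < q and w(r) > w(p)} — then w(p') ≤ w(p) and w(q') ≤ w(q). -/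
/-!
Write `t = t_{pq}` with `p < q`. Relabelling pairs by `t` matches the inversions of `w t` that `t`
does not invert with those of `w` that `t` does not invert, so `ℓ(w t) - ℓ(w)` is the change in
the number of inversions inside `Inv t = {(p, j) : p < j ≤ q} ∪ {(i, q) : p < i < q}`.
If `w p < w q` this change is positive, and each `r ∈ (p, q)` with `w p < w r < w q` contributes
two more inversions `(p, r)`, `(r, q)`. Hence `ℓ(w t) = ℓ(w) + 1` forces `w p < w q` with no value
of `w` on `(p, q)` strictly between them. For `q < q'` this rules out `w p' ≤ w p < w q < w q'`.
-/

open Equiv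

def InvSet (w : Perm ℕ) : Set (ℕ × ℕ) := {x | x.1 < x.2 ∧ w x.2 < w x.1}

theorem ell_eq_ncard_invSet (w : Perm ℕ) : ell w = (InvSet w).ncard := rfl

namespace FinSupp

variable {w : Perm ℕ}

theorem invSet_finite (hs : FinSupp w) : (InvSet w).Finite := by
  obtain ⟨N, hN⟩ := hs
  refine ((Set.finite_Iio N).prod (Set.finite_Iio N)).subset ?_
  rintro ⟨i, j⟩ ⟨hij, hw : w j < w i⟩
  have hj : j < N := by
    by_contra! hNj
    rw [hN j hNj] at hw
    have hwi : w (w i) = w i := hN (w i) (by omega)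
    have := w.injective hwi
    omega
  exact ⟨show i < N by omega, hj⟩

theorem mul_swap (hs : FinSupp w) (p q : ℕ) : FinSupp (w * swap p q) := by
  obtain ⟨N, hN⟩ := hs
  refine ⟨max N (max p q + 1), fun i hi => ?_⟩
  rw [Perm.mul_apply, swap_apply_of_ne_of_ne (by omega) (by omega)]
  exact hN i (by omega)

end FinSupp

theorem ncard_invSet_mul_sdiff (w t : Perm ℕ) :
    (InvSet (w * t) \ InvSet t).ncard = (InvSet w \ InvSet t⁻¹).ncard := by
  rw [← Set.ncard_image_of_injective _ (t.prodCongr t).injective, image_eq_preimage_symm]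
  congr 1
  ext ⟨a, b⟩
  have hinj : t.symm a = t.symm b ↔ a = b := t.symm.injective.eq_iff
  simp only [InvSet, Set.mem_preimage, Set.mem_sdiff, Set.mem_ofPred_eq, Perm.mul_apply,
    prodCongr_symm, prodCongr_apply, Prod.map, Perm.inv_def, apply_symm_apply]
  have hw : a = b → w a = w b := congrArg w
  omega

theorem ell_mul_add_ncard (w t : Perm ℕ) (hw : (InvSet w).Finite)
    (hwt : (InvSet (w * t)).Finite) :
    ell (w * t) + (InvSet w ∩ InvSet t⁻¹).ncard = ell w + (InvSet (w * t) ∩ InvSet t).ncard := by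
  have hu := Set.ncard_inter_add_ncard_sdiff_eq_ncard (InvSet (w * t)) (InvSet t) hwt
  have hv := Set.ncard_inter_add_ncard_sdiff_eq_ncard (InvSet w) (InvSet t⁻¹) hw
  rw [ncard_invSet_mul_sdiff] at hu
  rw [ell_eq_ncard_invSet, ell_eq_ncard_invSet]
  omega

section Swap

variable {w : Perm ℕ} {p q : ℕ}

theorem ell_mul_swap_add_ncard (hs : FinSupp w) (p q : ℕ) :
    ell (w * swap p q) + (InvSet w ∩ InvSet (swap p q)).ncard =
      ell w + (InvSet (w * swap p q) ∩ InvSet (swap p q)).ncard := by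
  simpa only [swap_inv] using
    ell_mul_add_ncard w (swap p q) hs.invSet_finite (hs.mul_swap p q).invSet_finite

theorem mem_invSet_swap (hpq : p < q) (i j : ℕ) :
    (i, j) ∈ InvSet (swap p q) ↔ (i = p ∧ p < j ∧ j ≤ q) ∨ (p < i ∧ i < j ∧ j = q) := by
  simp only [InvSet, Set.mem_ofPred_eq, swap_apply_def]
  split_ifs <;> omega

theorem invSet_inter_swap_subset (hpq : p < q) (h : w p < w q) :
    InvSet w ∩ InvSet (swap p q) ⊆ InvSet (w * swap p q) ∩ InvSet (swap p q) := by
  rintro ⟨i, j⟩ ⟨⟨hij, hw : w j < w i⟩, ht⟩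
  refine ⟨⟨hij, ?_⟩, ht⟩
  rw [mem_invSet_swap hpq] at ht
  rcases ht with ⟨rfl, hpj, hjq⟩ | ⟨hpi, hiq, rfl⟩
  · rcases hjq.lt_or_eq with hjq | rfl
    · simp only [Perm.mul_apply, swap_apply_of_ne_of_ne hpj.ne' hjq.ne, swap_apply_left]
      omega
    · omega
  · simp only [Perm.mul_apply, swap_apply_right, swap_apply_of_ne_of_ne hpi.ne' hiq.ne]
    omega

theorem ell_lt_ell_mul_swap (hs : FinSupp w) (hpq : p < q) (h : w p < w q) :
    ell w < ell (w * swap p q) := by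
  have hpq_mem : (p, q) ∈ InvSet (w * swap p q) ∩ InvSet (swap p q) :=
    ⟨⟨hpq, by simpa using h⟩, (mem_invSet_swap hpq p q).2 (Or.inl ⟨rfl, hpq, le_rfl⟩)⟩
  have hpq_not_mem : (p, q) ∉ InvSet w ∩ InvSet (swap p q) := fun hmem => lt_asymm h hmem.1.2
  have hlt := Set.ncard_lt_ncard
    ((Set.ssubset_iff_of_subset (invSet_inter_swap_subset hpq h)).2 ⟨_, hpq_mem, hpq_not_mem⟩)
    ((hs.mul_swap p q).invSet_finite.inter_of_left _)
  have := ell_mul_swap_add_ncard hs p q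
  omega

theorem lt_of_ell_lt_ell_mul_swap (hs : FinSupp w) (hpq : p < q)
    (h : ell w < ell (w * swap p q)) : w p < w q := by
  by_contra! hle
  have hlt : w q < w p := hle.lt_of_ne fun heq => hpq.ne' (w.injective heq)
  have := ell_lt_ell_mul_swap (hs.mul_swap p q) hpq (by simpa using hlt)
  rw [mul_assoc, swap_mul_self, mul_one] at this
  omega

theorem ell_add_two_le_ell_mul_swap (hs : FinSupp w) {r : ℕ} (hpr : p < r) (hrq : r < q)
    (hwpr : w p < w r) (hwrq : w r < w q) : ell w + 2 ≤ ell (w * swap p q) := by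
  have hpq : p < q := hpr.trans hrq
  have hwr : (w * swap p q) r = w r := by
    simp [swap_apply_of_ne_of_ne hpr.ne' hrq.ne]
  have hell := ell_mul_swap_add_ncard hs p q
  set A := InvSet w ∩ InvSet (swap p q)
  set B := InvSet (w * swap p q) ∩ InvSet (swap p q)
  have hpair : {(p, r), (r, q)} ⊆ B \ A := by
    rintro x (rfl | rfl)
    · refine ⟨⟨⟨hpr, by simpa [hwr] using hwrq⟩, ?_⟩, fun hx => ?_⟩
      · exact (mem_invSet_swap hpq p r).2 (Or.inl ⟨rfl, hpr, hrq.le⟩)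
      · exact lt_asymm hwpr hx.1.2
    · refine ⟨⟨⟨hrq, by simpa [hwr] using hwpr⟩, ?_⟩, fun hx => ?_⟩
      · exact (mem_invSet_swap hpq r q).2 (Or.inr ⟨hpr, hrq, rfl⟩)
      · exact lt_asymm hwrq hx.1.2
  have hB : B.Finite := (hs.mul_swap p q).invSet_finite.inter_of_left _
  have h2 : 2 ≤ B.ncard - A.ncard := by
    rw [← Set.ncard_sdiff' (invSet_inter_swap_subset hpq (hwpr.trans hwrq)) hB,
      ← Set.ncard_pair (show (p, r) ≠ (r, q) by simp [hpr.ne])]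
    exact Set.ncard_le_ncard hpair hB.sdiff
  omega

end Swap

theorem stmt9_general (w : Equiv.Perm ℕ) (hs : FinSupp w) (ν p q p' q' : ℕ)
    (h1 : p ≤ ν) (h2 : ν < q) (h3 : p' ≤ ν)
    (hl : ell (w * Equiv.swap p q) = ell w + 1)
    (hl' : ell (w * Equiv.swap p' q') = ell w + 1)
    (hq' : ¬ (q' < q ∧ w p < w q')) (hp' : ¬ (p' < q ∧ w p < w p')) :
    w p' ≤ w p ∧ w q' ≤ w q := by
  have hwpq : w p < w q := lt_of_ell_lt_ell_mul_swap hs (by omega) (by omega)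
  have hwp' : w p' ≤ w p := not_lt.1 fun h => hp' ⟨by omega, h⟩
  refine ⟨hwp', ?_⟩
  rcases lt_trichotomy q' q with hlt | rfl | hgt
  · exact (not_lt.1 fun h => hq' ⟨hlt, h⟩).trans hwpq.le
  · exact le_rfl
  · by_contra! hwq
    have := ell_add_two_le_ell_mul_swap hs (by omega : p' < q) hgt (hwp'.trans_lt hwpq) hwq
    omega

/-- Let `p ≤ ν < q` and `p' ≤ ν < q'` with `ℓ(w t_{pq}) = ℓ(w t_{p'q'}) = ℓ(w) + 1`.
If `p', q' ∉ {r : r < q ∧ w(r) > w(p)}`, then `w(p') ≤ w(p)` and `w(q') ≤ w(q)`. -/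
theorem stmt9 (w : Equiv.Perm ℕ) (hs : FinSupp w) (ν p q p' q' : ℕ)
    (h1 : p ≤ ν) (h2 : ν < q) (h3 : p' ≤ ν) (h4 : ν < q')
    (hl : ell (w * Equiv.swap p q) = ell w + 1)
    (hl' : ell (w * Equiv.swap p' q') = ell w + 1)
    (hq' : ¬ (q' < q ∧ w p < w q')) (hp' : ¬ (p' < q ∧ w p < w p')) :
    w p' ≤ w p ∧ w q' ≤ w q :=
  stmt9_general w hs ν p q p' q' h1 h2 h3 hl hl' hq' hp'
end

section
/- For w ∈ S_n, in the expansion Π_{2≤i≤n} e_{l_i(w)}(x₁,…,x_{i−1}) = Σ_{u∈S_n} n_{wu} 𝔖_u, the coefficient n_{ww} equals 1, and n_{wu} ≠ 0 implies w⁻¹ ≤ u⁻¹ in lexicographic order. -/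
open MvPolynomial

/-- Regard an element of `S_n` as a finitely supported permutation of `ℕ`. -/
def extN {n : ℕ} (w : Equiv.Perm (Fin n)) : Equiv.Perm ℕ :=
  w.extendDomain Fin.equivSubtype

/-- `l_i(v) = #{j < i : v(j) > v(i)}` (0-indexed). -/
def code (v : Equiv.Perm ℕ) (i : ℕ) : ℕ :=
  ((Finset.range i).filter fun j => v i < v j).card

/-- The `k`-th elementary symmetric polynomial in `x₀, …, x_{m−1}`. -/
noncomputable def esymmRange (m k : ℕ) : MvPolynomial ℕ ℤ :=
  ∑ s ∈ Finset.powersetCard k (Finset.range m), ∏ j ∈ s, X j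

/-- Strict lexicographic order on permutations: `x >_lex y` iff there is `i`
with `x(j) = y(j)` for `j < i` and `x(i) > y(i)`. -/
def LexGT (x y : Equiv.Perm ℕ) : Prop :=
  ∃ i, (∀ j, j < i → x j = y j) ∧ y i < x i

/-!
The expansion is built by well-founded induction along the lexicographic order of `w⁻¹`.
If the code of `w` is `0, 1, …, n - 1`, then `w` is the longest element and the product is the
staircase monomial `𝔖_w`. Otherwise the code starts with `0, 1, …, r, a` with `a ≤ r`. The
product for `v = w sᵣ` is `xᵣ B` with `B` symmetric in `xᵣ, xᵣ₊₁`, so `∂ᵣ` of it is `B`, and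
`∂ᵣ 𝔖ᵤ = 𝔖_{u sᵣ}` turns the expansion of `v` into one of `B`. By
`e_{r+1}(a) = e_r(a) + xᵣ e_r(a - 1)` the product for `w` is `B` plus the product for
`w sᵣ (a - 1, r)`. Both `v⁻¹` and `(w sᵣ (a - 1, r))⁻¹` are lexicographically larger than `w⁻¹`.
The coefficients are unique because the `𝔖ᵤ` are linearly independent: applying `∂ᵣ` at a
descent `r` of a term of maximal length lowers the maximal length.
-/

open Equiv Finset

section Length

theorem apply_lt_of_forall_le_apply_eq {x : Perm ℕ} {N : ℕ} (hN : ∀ i, N ≤ i → x i = i)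
    {i : ℕ} (h : i < N) : x i < N := by
  by_contra hc
  have := x.injective (hN (x i) (not_lt.1 hc))
  omega

theorem FinSupp.mul_swap_s13 {x : Perm ℕ} (hx : FinSupp x) (r : ℕ) :
    FinSupp (x * swap r (r + 1)) := by
  obtain ⟨N, hN⟩ := hx
  refine ⟨max N (r + 2), fun i hi => ?_⟩
  rw [Perm.mul_apply, swap_apply_of_ne_of_ne (by omega) (by omega)]
  exact hN i (by omega)

theorem finite_inversions {x : Perm ℕ} (hx : FinSupp x) :
    {p : ℕ × ℕ | p.1 < p.2 ∧ x p.2 < x p.1}.Finite := by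
  obtain ⟨N, hN⟩ := hx
  refine ((Set.finite_Iio N).prod (Set.finite_Iio N)).subset ?_
  rintro ⟨i, j⟩ ⟨hij, hx⟩
  dsimp only at hij hx
  have hj : j < N := by
    by_contra hj
    rw [hN j (by omega)] at hx
    rcases lt_or_ge i N with hi | hi
    · have := apply_lt_of_forall_le_apply_eq hN hi
      omega
    · rw [hN i hi] at hx
      omega
  exact ⟨show i < N by omega, hj⟩

theorem ell_mul_swap_of_lt {x : Perm ℕ} (hx : FinSupp x) {r : ℕ} (h : x r < x (r + 1)) :
    ell (x * swap r (r + 1)) = ell x + 1 := by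
  set s := swap r (r + 1)
  have hinv : {p : ℕ × ℕ | p.1 < p.2 ∧ (x * s) p.2 < (x * s) p.1}
      = insert (r, r + 1) (Prod.map s s ⁻¹' {p | p.1 < p.2 ∧ x p.2 < x p.1}) := by
    ext ⟨i, j⟩
    simp only [Set.mem_ofPred_eq, Set.mem_insert_iff, Set.mem_preimage, Prod.map,
      Prod.mk.injEq, Perm.mul_apply, s, swap_apply_def]
    split_ifs <;> omega
  have hnot : (r, r + 1) ∉ Prod.map s s ⁻¹' {p | p.1 < p.2 ∧ x p.2 < x p.1} := by
    simp [s, swap_apply_left, swap_apply_right]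
  have hinj : Function.Injective (Prod.map s s) := s.injective.prodMap s.injective
  have hrange : Set.range (Prod.map s s) = Set.univ :=
    (s.surjective.prodMap s.surjective).range_eq
  rw [ell, hinv, Set.ncard_insert_of_notMem hnot ((finite_inversions hx).preimage hinj.injOn),
    Set.ncard_preimage_of_injective_subset_range hinj (hrange ▸ Set.subset_univ _), ell]

theorem ell_mul_swap_of_gt {x : Perm ℕ} (hx : FinSupp x) {r : ℕ} (h : x (r + 1) < x r) :
    ell (x * swap r (r + 1)) + 1 = ell x := by
  have hasc : (x * swap r (r + 1)) r < (x * swap r (r + 1)) (r + 1) := by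
    simpa only [Perm.mul_apply, swap_apply_left, swap_apply_right] using h
  rw [← ell_mul_swap_of_lt (hx.mul_swap_s13 r) hasc, mul_assoc, swap_mul_self, mul_one]

theorem ell_one : ell 1 = 0 := by
  have hempty : {p : ℕ × ℕ | p.1 < p.2 ∧ (1 : Perm ℕ) p.2 < (1 : Perm ℕ) p.1} = ∅ := by
    ext ⟨i, j⟩
    simp only [Perm.one_apply, Set.mem_ofPred_eq, Set.mem_empty_iff_false, iff_false]
    omega
  rw [ell, hempty, Set.ncard_empty]

end Length

section Code

theorem code_eq_self_iff {y : Perm ℕ} {j : ℕ} : code y j = j ↔ ∀ i < j, y j < y i := by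
  have h := card_filter_eq_iff (s := range j) (p := fun i => y j < y i)
  rw [card_range] at h
  simpa only [code, mem_range] using h

theorem code_eq_of_forall_lt_iff {z : Perm ℕ} {j b : ℕ} (hb : b ≤ j)
    (h : ∀ i < j, z j < z i ↔ i < b) : code z j = b := by
  have hfilter : (range j).filter (fun i => z j < z i) = range b := by
    ext i
    rw [mem_filter, mem_range, mem_range]
    exact ⟨fun hi => (h i hi.1).1 hi.2, fun hi => ⟨by omega, (h i (by omega)).2 hi⟩⟩
  rw [code, hfilter, card_range]

theorem lt_iff_lt_code {y : Perm ℕ} {m : ℕ} (hanti : ∀ i j, i < j → j < m → y j < y i)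
    {j : ℕ} (hj : j < m) : y m < y j ↔ j < code y m := by
  constructor
  · intro hlt
    have hsub : range (j + 1) ⊆ (range m).filter fun i => y m < y i := fun i hi => by
      rw [mem_range] at hi
      rw [mem_filter, mem_range]
      rcases (show i < j ∨ i = j by omega) with hij | rfl
      · exact ⟨by omega, hlt.trans (hanti i j hij hj)⟩
      · exact ⟨hj, hlt⟩
    simpa only [code, card_range, Nat.add_one_le_iff] using card_le_card hsub
  · intro hlt
    by_contra hge
    have hsub : (range m).filter (fun i => y m < y i) ⊆ range j := fun i hi => by
      rw [mem_filter, mem_range] at hi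
      rw [mem_range]
      by_contra hij
      rcases (show j = i ∨ j < i by omega) with rfl | hji
      · exact hge hi.2
      · exact hge (hi.2.trans (hanti j i hji hi.1))
    exact absurd hlt (not_lt.2 (by simpa only [code, card_range] using card_le_card hsub))

theorem code_mul_of_forall_le_apply_eq {y σ : Perm ℕ} {j : ℕ} (hσ : ∀ i ≤ j, σ i = i) :
    code (y * σ) j = code y j := by
  refine congrArg card (filter_congr fun i hi => ?_)
  rw [Perm.mul_apply, Perm.mul_apply, hσ j le_rfl, hσ i (by rw [mem_range] at hi; omega)]

theorem code_mul_of_forall_ge_apply_eq {y σ : Perm ℕ} {j : ℕ} (hσ : ∀ i, j ≤ i → σ i = i) :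
    code (y * σ) j = code y j := by
  have hfilter : (range j).filter (fun i => (y * σ) j < (y * σ) i)
      = ((range j).filter fun i => y j < y i).map σ⁻¹.toEmbedding := by
    ext i
    have hlt : i < j ↔ σ i < j := by
      constructor
      · exact apply_lt_of_forall_le_apply_eq hσ
      · intro h
        by_contra hi
        rw [hσ i (by omega)] at h
        exact hi h
    rw [mem_map_equiv, mem_filter, mem_filter, mem_range, mem_range, Perm.mul_apply,
      Perm.mul_apply, hσ j le_rfl, hlt]
    rfl
  rw [code, hfilter, card_map, code]

end Code

section Lex

theorem lexGT_irrefl (x : Perm ℕ) : ¬LexGT x x := fun ⟨_, _, h⟩ => lt_irrefl _ h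

theorem lexGT_trans {x y z : Perm ℕ} : LexGT x y → LexGT y z → LexGT x z := by
  rintro ⟨i, hxy, hi⟩ ⟨j, hyz, hj⟩
  rcases lt_trichotomy i j with hij | rfl | hij
  · exact ⟨i, fun k hk => (hxy k hk).trans (hyz k (hk.trans hij)), hyz i hij ▸ hi⟩
  · exact ⟨i, fun k hk => (hxy k hk).trans (hyz k hk), hj.trans hi⟩
  · exact ⟨j, fun k hk => (hxy k (hk.trans hij)).trans (hyz k hk), (hxy j hij).symm ▸ hj⟩

theorem wellFounded_lexGT_extN_inv {n : ℕ} :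
    WellFounded fun v w : Perm (Fin n) => LexGT (extN v⁻¹) (extN w⁻¹) :=
  @Finite.wellFounded_of_trans_of_irrefl _ _ _ ⟨fun _ _ _ => lexGT_trans⟩ ⟨fun _ => lexGT_irrefl _⟩

theorem lexGT_inv_mul {y τ : Perm ℕ} {k : ℕ} (hfix : ∀ p, y p < y k → τ p = p)
    (hk : k < τ⁻¹ k) : LexGT (y * τ)⁻¹ y⁻¹ := by
  refine ⟨y k, fun q hq => ?_, ?_⟩
  · have hp : τ (y⁻¹ q) = y⁻¹ q := hfix _ (by simpa using hq)
    rw [mul_inv_rev, Perm.mul_apply, Perm.inv_eq_iff_eq.2 hp.symm]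
  · simpa using hk

theorem lexGT_swap_mul {p q : Perm ℕ} {r : ℕ} (hq : q⁻¹ (r + 1) < q⁻¹ r) (h : LexGT p q) :
    LexGT (swap r (r + 1) * p) (swap r (r + 1) * q) := by
  obtain ⟨i, hpq, hi⟩ := h
  refine ⟨i, fun j hj => by rw [Perm.mul_apply, Perm.mul_apply, hpq j hj], ?_⟩
  have hgood : ¬(q i = r ∧ p i = r + 1) := by
    rintro ⟨hqi, hpi⟩
    have hqr : q⁻¹ r = i := by simp [← hqi]
    have hp : p (q⁻¹ (r + 1)) = p i := by
      rw [hpq _ (by omega), hpi]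
      simp
    have := p.injective hp
    omega
  rw [Perm.mul_apply, Perm.mul_apply, swap_apply_def, swap_apply_def]
  split_ifs <;> omega

end Lex

section ExtN

variable {n : ℕ}

theorem extN_apply_of_lt (w : Perm (Fin n)) {i : ℕ} (h : i < n) : extN w i = w ⟨i, h⟩ :=
  Perm.extendDomain_apply_subtype w Fin.equivSubtype (show i < n from h)

theorem extN_apply_of_le (w : Perm (Fin n)) {i : ℕ} (h : n ≤ i) : extN w i = i :=
  Perm.extendDomain_apply_not_subtype w Fin.equivSubtype (show ¬i < n by omega)

theorem extN_mul (u v : Perm (Fin n)) : extN (u * v) = extN u * extN v :=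
  (Perm.extendDomain_mul _ u v).symm

theorem extN_one : extN (1 : Perm (Fin n)) = 1 :=
  Perm.extendDomain_one _

theorem extN_inv (u : Perm (Fin n)) : extN u⁻¹ = (extN u)⁻¹ := by
  rw [eq_inv_iff_mul_eq_one, ← extN_mul, inv_mul_cancel, extN_one]

theorem finSupp_extN (w : Perm (Fin n)) : FinSupp (extN w) :=
  ⟨n, fun _ h => extN_apply_of_le w h⟩

theorem extN_swap {i j : ℕ} (hi : i < n) (hj : j < n) :
    extN (swap (⟨i, hi⟩ : Fin n) ⟨j, hj⟩) = swap i j := by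
  ext k
  rcases lt_or_ge k n with hk | hk
  · rw [extN_apply_of_lt _ hk, swap_apply_def, swap_apply_def]
    simp only [Fin.ext_iff]
    split_ifs <;> rfl
  · rw [extN_apply_of_le _ hk, swap_apply_of_ne_of_ne (by omega) (by omega)]

def adjSwap {r : ℕ} (hr : r + 1 < n) : Perm (Fin n) := swap ⟨r, by omega⟩ ⟨r + 1, hr⟩

theorem extN_adjSwap {r : ℕ} (hr : r + 1 < n) : extN (adjSwap hr) = swap r (r + 1) :=
  extN_swap _ _

theorem mul_adjSwap_mul_adjSwap (u : Perm (Fin n)) {r : ℕ} (hr : r + 1 < n) :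
    u * adjSwap hr * adjSwap hr = u := by
  rw [mul_assoc, adjSwap, swap_mul_self, mul_one]

theorem extN_mul_adjSwap_apply_left (u : Perm (Fin n)) {r : ℕ} (hr : r + 1 < n) :
    extN (u * adjSwap hr) r = extN u (r + 1) := by
  rw [extN_mul, extN_adjSwap, Perm.mul_apply, swap_apply_left]

theorem extN_mul_adjSwap_apply_right (u : Perm (Fin n)) {r : ℕ} (hr : r + 1 < n) :
    extN (u * adjSwap hr) (r + 1) = extN u r := by
  rw [extN_mul, extN_adjSwap, Perm.mul_apply, swap_apply_right]

theorem exists_descent_of_ne_one {u : Perm (Fin n)} (hu : u ≠ 1) :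
    ∃ r, r + 1 < n ∧ extN u (r + 1) < extN u r := by
  contrapose! hu
  cases n with
  | zero => exact Subsingleton.elim _ _
  | succ m =>
    have hmono : StrictMono u := Fin.strictMono_iff_lt_succ.2 fun i => by
      have h := hu i (by omega)
      rw [extN_apply_of_lt _ (by omega), extN_apply_of_lt _ (by omega)] at h
      exact lt_of_le_of_ne h (u.injective.ne Fin.castSucc_lt_succ.ne)
    exact Perm.ext fun i => hmono.apply_eq

theorem eq_revPerm_of_code_eq_self {w : Perm (Fin n)}
    (h : ∀ j < n, code (extN w) j = j) : w = Fin.revPerm := by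
  have hanti : StrictAnti w := fun i j hij => by
    have hlt := code_eq_self_iff.1 (h j j.isLt) i hij
    rwa [extN_apply_of_lt _ j.isLt, extN_apply_of_lt _ i.isLt] at hlt
  have hmono : StrictMono fun i => (w i).rev := fun i j hij => Fin.rev_lt_rev.2 (hanti hij)
  exact Perm.ext fun i => by simpa using congrArg Fin.rev (hmono.apply_eq (x := i))

theorem extN_revPerm_apply {i : ℕ} (hi : i < n) :
    extN (Fin.revPerm : Perm (Fin n)) i = n - 1 - i := by
  rw [extN_apply_of_lt _ hi, Fin.revPerm_apply, Fin.val_rev, Fin.val_mk]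
  omega

end ExtN

section Esymm

theorem esymmRange_zero (m : ℕ) : esymmRange m 0 = 1 := by
  simp [esymmRange]

theorem esymmRange_self (m : ℕ) : esymmRange m m = ∏ j ∈ range m, X j := by
  have h := powersetCard_self (range m)
  rw [card_range] at h
  rw [esymmRange, h, sum_singleton]

theorem esymmRange_succ (m k : ℕ) :
    esymmRange (m + 1) (k + 1) = esymmRange m (k + 1) + X m * esymmRange m k := by
  simp only [esymmRange, ← Finset.esymm_map_val]
  simp [Multiset.esymm, Multiset.range_succ,
    Multiset.powersetCard_cons, Multiset.sum_map_mul_left]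

theorem rename_esymmRange {σ : Perm ℕ} {m : ℕ} (hσ : (range m).map σ.toEmbedding = range m)
    (k : ℕ) : rename σ (esymmRange m k) = esymmRange m k := by
  conv_rhs => rw [esymmRange, ← hσ, powersetCard_map, sum_map]
  simp [esymmRange, map_prod]

theorem map_swap_range {m r : ℕ} (h : m ≠ r + 1) :
    (range m).map (swap r (r + 1)).toEmbedding = range m := by
  ext j
  rw [mem_map_equiv, symm_swap, mem_range, mem_range, swap_apply_def]
  split_ifs <;> omega

end Esymm

section DividedDifference

theorem X_sub_X_succ_ne_zero {R : Type*} [CommRing R] [Nontrivial R] (r : ℕ) :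
    (X r - X (r + 1) : MvPolynomial ℕ R) ≠ 0 :=
  sub_ne_zero.2 fun h => by simpa using X_injective h

theorem rename_swap_eq_of_mul_eq_sub {R : Type*} [CommRing R] [IsDomain R]
    {p q : MvPolynomial ℕ R} {r : ℕ}
    (h : (X r - X (r + 1)) * q = p - rename (swap r (r + 1)) p) :
    rename (swap r (r + 1)) q = q := by
  have hσ := congrArg (rename (swap r (r + 1))) h
  simp only [map_mul, map_sub, rename_X, swap_apply_left, swap_apply_right, rename_rename,
    ← Perm.coe_mul, swap_mul_self, Perm.coe_one, rename_id, AlgHom.id_apply] at hσ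
  have hzero : (X r - X (r + 1)) * (rename (swap r (r + 1)) q - q) = 0 := by
    linear_combination -hσ - h
  exact sub_eq_zero.1 ((mul_eq_zero.1 hzero).resolve_left (X_sub_X_succ_ne_zero r))

def HasDividedDifferences (S : Perm ℕ → MvPolynomial ℕ ℤ) : Prop :=
  ∀ (v : Perm ℕ) (i : ℕ), FinSupp v → ell (v * swap i (i + 1)) < ell v →
    (X i - X (i + 1)) * S (v * swap i (i + 1)) = S v - rename (⇑(swap i (i + 1))) (S v)

variable {S : Perm ℕ → MvPolynomial ℕ ℤ}

theorem HasDividedDifferences.sub_rename_of_gt (hS : HasDividedDifferences S) {x : Perm ℕ}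
    (hx : FinSupp x) {r : ℕ} (h : x (r + 1) < x r) :
    S x - rename (swap r (r + 1)) (S x) = (X r - X (r + 1)) * S (x * swap r (r + 1)) :=
  (hS x r hx (by have := ell_mul_swap_of_gt hx h; omega)).symm

theorem HasDividedDifferences.rename_of_lt (hS : HasDividedDifferences S) {x : Perm ℕ}
    (hx : FinSupp x) {r : ℕ} (h : x r < x (r + 1)) :
    rename (swap r (r + 1)) (S x) = S x := by
  have hdesc : (x * swap r (r + 1)) (r + 1) < (x * swap r (r + 1)) r := by
    simpa only [Perm.mul_apply, swap_apply_left, swap_apply_right] using h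
  have hx' := hS.sub_rename_of_gt (hx.mul_swap_s13 r) hdesc
  rw [mul_assoc, swap_mul_self, mul_one] at hx'
  exact rename_swap_eq_of_mul_eq_sub hx'.symm

variable {n : ℕ}

/-- Coefficients of `∂ᵣ (∑ᵤ d u • 𝔖ᵤ)` in the basis `𝔖ₓ`. -/
def coeffDiff {r : ℕ} (hr : r + 1 < n) (d : Perm (Fin n) → ℤ) (x : Perm (Fin n)) : ℤ :=
  if extN x r < extN x (r + 1) then d (x * adjSwap hr) else 0

theorem HasDividedDifferences.sum_sub_rename (hS : HasDividedDifferences S) {r : ℕ}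
    (hr : r + 1 < n) (d : Perm (Fin n) → ℤ) :
    (∑ u, d u • S (extN u)) - rename (swap r (r + 1)) (∑ u, d u • S (extN u))
      = (X r - X (r + 1)) * ∑ x, coeffDiff hr d x • S (extN x) := by
  have hterm : ∀ u : Perm (Fin n), S (extN u) - rename (swap r (r + 1)) (S (extN u))
      = (X r - X (r + 1)) *
        if extN u (r + 1) < extN u r then S (extN (u * adjSwap hr)) else 0 := by
    intro u
    split_ifs with h
    · rw [hS.sub_rename_of_gt (finSupp_extN u) h, extN_mul, extN_adjSwap]
    · have hne : extN u r ≠ extN u (r + 1) := (extN u).injective.ne (by omega)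
      rw [hS.rename_of_lt (finSupp_extN u) (lt_of_le_of_ne (not_lt.1 h) hne), sub_self,
        mul_zero]
  rw [← Equiv.sum_comp (Equiv.mulRight (adjSwap hr)), map_sum, ← sum_sub_distrib, mul_sum]
  refine sum_congr rfl fun u _ => ?_
  rw [map_zsmul, ← smul_sub, hterm, coe_mulRight, coeffDiff, extN_mul_adjSwap_apply_left,
    extN_mul_adjSwap_apply_right, mul_adjSwap_mul_adjSwap, mul_smul_comm]
  split_ifs <;> simp

theorem HasDividedDifferences.sum_coeffDiff_eq (hS : HasDividedDifferences S) {r : ℕ}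
    (hr : r + 1 < n) {d : Perm (Fin n) → ℤ} {p q : MvPolynomial ℕ ℤ}
    (hp : p = ∑ u, d u • S (extN u)) (h : p - rename (swap r (r + 1)) p = (X r - X (r + 1)) * q) :
    ∑ x, coeffDiff hr d x • S (extN x) = q :=
  mul_left_cancel₀ (X_sub_X_succ_ne_zero r) (by rw [← hS.sum_sub_rename hr, ← hp, h])

end DividedDifference

section LinearIndependence

variable {n : ℕ} {S : Perm ℕ → MvPolynomial ℕ ℤ}

theorem ell_extN_mul_adjSwap_of_lt {x : Perm (Fin n)} {r : ℕ} (hr : r + 1 < n)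
    (h : extN x r < extN x (r + 1)) : ell (extN (x * adjSwap hr)) = ell (extN x) + 1 := by
  rw [extN_mul, extN_adjSwap]
  exact ell_mul_swap_of_lt (finSupp_extN x) h

theorem ell_extN_pos {u : Perm (Fin n)} (hu : u ≠ 1) : 0 < ell (extN u) := by
  obtain ⟨r, hr, hdesc⟩ := exists_descent_of_ne_one hu
  have := ell_mul_swap_of_gt (finSupp_extN u) hdesc
  omega

theorem HasDividedDifferences.eq_zero_of_sum_eq_zero (hS1 : S 1 = 1)
    (hS : HasDividedDifferences S) (k : ℕ) (d : Perm (Fin n) → ℤ)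
    (hk : ∀ u, d u ≠ 0 → ell (extN u) ≤ k) (hd : ∑ u, d u • S (extN u) = 0) (u : Perm (Fin n)) :
    d u = 0 := by
  induction k generalizing d u with
  | zero =>
    have hone : ∀ x, x ≠ 1 → d x = 0 := fun x hx => by
      by_contra h
      exact (ell_extN_pos hx).ne' (Nat.le_zero.1 (hk x h))
    rw [sum_eq_single 1 (fun x _ hx => by rw [hone x hx, zero_smul]) (by simp), extN_one, hS1,
      zsmul_eq_mul, mul_one, Int.cast_eq_zero] at hd
    by_cases hu : u = 1
    · rwa [hu]
    · exact hone u hu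
  | succ k ih =>
    have htop : ∀ x, ell (extN x) = k + 1 → d x = 0 := by
      intro x hx
      obtain ⟨r, hr, hdesc⟩ := exists_descent_of_ne_one (u := x) (by
        rintro rfl
        rw [extN_one, ell_one] at hx
        omega)
      have hd' := hS.sum_coeffDiff_eq hr hd.symm (q := 0) (by simp)
      have hk' : ∀ y, coeffDiff hr d y ≠ 0 → ell (extN y) ≤ k := by
        intro y hy
        unfold coeffDiff at hy
        split_ifs at hy with hasc
        · have := hk _ hy
          rw [ell_extN_mul_adjSwap_of_lt hr hasc] at this
          omega
        · exact absurd rfl hy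
      have := ih (coeffDiff hr d) hk' hd' (x * adjSwap hr)
      rwa [coeffDiff, extN_mul_adjSwap_apply_left, extN_mul_adjSwap_apply_right, if_pos hdesc,
        mul_adjSwap_mul_adjSwap] at this
    exact ih d (fun x hx => by have := hk x hx; have := htop x; omega) hd u

theorem linearIndependent_extN (hS1 : S 1 = 1) (hS : HasDividedDifferences S) :
    LinearIndependent ℤ fun u : Perm (Fin n) => S (extN u) :=
  Fintype.linearIndependent_iff.2 fun d hd =>
    hS.eq_zero_of_sum_eq_zero hS1 _ d
      (fun u _ => le_sup (f := fun u => ell (extN u)) (mem_univ u)) hd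

end LinearIndependence

/-- The code of `y` starts with `0, 1, …, r, a`. -/
structure StairPrefix (y : Perm ℕ) (r a : ℕ) : Prop where
  anti : ∀ i j, i < j → j ≤ r → y j < y i
  lt_iff : ∀ j ≤ r, y (r + 1) < y j ↔ j < a
  le : a ≤ r

theorem exists_stairPrefix {y : Perm ℕ} {n : ℕ} (h : ∃ j < n, code y j ≠ j) :
    ∃ r a, r + 1 < n ∧ StairPrefix y r a := by
  obtain ⟨hlt, hne⟩ := Nat.find_spec h
  have hpos : Nat.find h ≠ 0 := fun h0 => hne (by rw [h0]; rfl)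
  have hpre : ∀ j ≤ Nat.find h - 1, code y j = j := fun j hj =>
    not_not.1 fun hj' => Nat.find_min h (show j < Nat.find h by omega) ⟨by omega, hj'⟩
  have hanti : ∀ i j, i < j → j ≤ Nat.find h - 1 → y j < y i := fun i j hij hj =>
    code_eq_self_iff.1 (hpre j hj) i hij
  have hsucc : Nat.find h - 1 + 1 = Nat.find h := by omega
  refine ⟨Nat.find h - 1, code y (Nat.find h), by omega, hanti, fun j hj => ?_, ?_⟩
  · rw [hsucc]
    exact lt_iff_lt_code (fun i k hik hk => hanti i k hik (by omega)) (by omega)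
  · have : code y (Nat.find h) ≤ Nat.find h := (card_filter_le _ _).trans (card_range _).le
    omega

namespace StairPrefix

variable {y : Perm ℕ} {r a : ℕ}

theorem apply_lt_apply_of_le (h : StairPrefix y r a) {j : ℕ} (hj : j ≤ r + 1) (hjr : j ≠ r) :
    y r < y j := by
  rcases (show j < r ∨ j = r + 1 by omega) with hj | rfl
  · exact h.anti j r hj le_rfl
  · have := h.lt_iff r le_rfl
    have := h.le
    have hne : y (r + 1) ≠ y r := y.injective.ne (by omega)
    omega

theorem apply_lt_apply_succ (h : StairPrefix y r a) : y r < y (r + 1) :=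
  h.apply_lt_apply_of_le le_rfl (by omega)

theorem code_of_le (h : StairPrefix y r a) {j : ℕ} (hj : j ≤ r) : code y j = j :=
  code_eq_of_forall_lt_iff le_rfl fun i hi => iff_of_true (h.anti i j hi hj) hi

theorem code_succ (h : StairPrefix y r a) : code y (r + 1) = a :=
  code_eq_of_forall_lt_iff (by have := h.le; omega) fun i hi => h.lt_iff i (by omega)

theorem code_mul_swap_self (h : StairPrefix y r a) : code (y * swap r (r + 1)) r = a := by
  refine code_eq_of_forall_lt_iff h.le fun i hi => ?_
  rw [Perm.mul_apply, Perm.mul_apply, swap_apply_left, swap_apply_of_ne_of_ne (by omega) (by omega)]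
  exact h.lt_iff i hi.le

theorem code_mul_swap_succ (h : StairPrefix y r a) :
    code (y * swap r (r + 1)) (r + 1) = r + 1 := by
  refine code_eq_of_forall_lt_iff le_rfl fun i hi => iff_of_true ?_ hi
  rw [Perm.mul_apply, Perm.mul_apply, swap_apply_right]
  exact h.apply_lt_apply_of_le (by rw [swap_apply_def]; split_ifs <;> omega)
    (by rw [swap_apply_def]; split_ifs <;> omega)

theorem mul_swap_mul_swap_apply (h : StairPrefix y r a) (ha : 1 ≤ a) (i : ℕ) :
    (y * swap r (r + 1) * swap (a - 1) r) i =
      if i = a - 1 then y (r + 1) else if i = r then y (a - 1) else if i = r + 1 then y r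
      else y i := by
  have := h.le
  simp only [Perm.mul_apply, swap_apply_def]
  split_ifs <;> first | rfl | omega

theorem code_mul_swap_mul_swap_of_lt (h : StairPrefix y r a) (ha : 1 ≤ a) {j : ℕ} (hj : j < r) :
    code (y * swap r (r + 1) * swap (a - 1) r) j = j := by
  have := h.le
  refine code_eq_of_forall_lt_iff le_rfl fun i hi => iff_of_true ?_ hi
  rw [h.mul_swap_mul_swap_apply ha, h.mul_swap_mul_swap_apply ha, if_neg (by omega : j ≠ r),
    if_neg (by omega : j ≠ r + 1), if_neg (by omega : i ≠ r), if_neg (by omega : i ≠ r + 1)]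
  by_cases hja : j = a - 1
  · rw [if_pos hja, if_neg (by omega)]
    exact (h.lt_iff i (by omega)).2 (by omega)
  by_cases hia : i = a - 1
  · rw [if_neg hja, if_pos hia]
    have := h.lt_iff j hj.le
    have : y j ≠ y (r + 1) := y.injective.ne (by omega)
    omega
  · rw [if_neg hja, if_neg hia]
    exact h.anti i j hi hj.le

theorem code_mul_swap_mul_swap_self (h : StairPrefix y r a) (ha : 1 ≤ a) :
    code (y * swap r (r + 1) * swap (a - 1) r) r = a - 1 := by
  have := h.le
  refine code_eq_of_forall_lt_iff (by omega) fun i hi => ?_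
  rw [h.mul_swap_mul_swap_apply ha, h.mul_swap_mul_swap_apply ha, if_neg (by omega : r ≠ a - 1),
    if_pos rfl, if_neg (by omega : i ≠ r), if_neg (by omega : i ≠ r + 1)]
  by_cases hia : i = a - 1
  · rw [if_pos hia]
    have := (h.lt_iff (a - 1) (by omega)).2 (by omega)
    omega
  · rw [if_neg hia]
    rcases lt_or_gt_of_ne hia with hlt | hgt
    · exact iff_of_true (h.anti i (a - 1) hlt (by omega)) hlt
    · exact iff_of_false (not_lt.2 (h.anti (a - 1) i hgt hi.le).le) (by omega)

theorem code_mul_swap_mul_swap_succ (h : StairPrefix y r a) (ha : 1 ≤ a) :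
    code (y * swap r (r + 1) * swap (a - 1) r) (r + 1) = r + 1 := by
  have := h.le
  refine code_eq_of_forall_lt_iff le_rfl fun i hi => iff_of_true ?_ hi
  rw [h.mul_swap_mul_swap_apply ha, h.mul_swap_mul_swap_apply ha, if_neg (by omega),
    if_neg (by omega), if_pos rfl, if_neg (by omega : i ≠ r + 1)]
  split_ifs <;> exact h.apply_lt_apply_of_le (by omega) (by omega)

theorem lexGT_mul_swap (h : StairPrefix y r a) : LexGT (y * swap r (r + 1))⁻¹ y⁻¹ := by
  refine lexGT_inv_mul (k := r) (fun p hp => swap_apply_of_ne_of_ne ?_ ?_) ?_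
  · rintro rfl
    exact lt_irrefl _ hp
  · rintro rfl
    exact lt_asymm hp h.apply_lt_apply_succ
  · simp

theorem lexGT_mul_swap_mul_swap (h : StairPrefix y r a) (ha : 1 ≤ a) :
    LexGT (y * swap r (r + 1) * swap (a - 1) r)⁻¹ y⁻¹ := by
  have := h.le
  rw [mul_assoc]
  refine lexGT_inv_mul (k := r) (fun p hp => ?_) ?_
  · have hr : p ≠ r := by
      rintro rfl
      exact lt_irrefl _ hp
    have hr1 : p ≠ r + 1 := by
      rintro rfl
      exact lt_asymm hp h.apply_lt_apply_succ
    have ha1 : p ≠ a - 1 := by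
      rintro rfl
      exact lt_asymm hp (h.apply_lt_apply_of_le (by omega) (by omega))
    rw [Perm.mul_apply, swap_apply_of_ne_of_ne ha1 hr, swap_apply_of_ne_of_ne hr hr1]
  · rw [mul_inv_rev, swap_inv, swap_inv, Perm.mul_apply, swap_apply_left,
      swap_apply_of_ne_of_ne (by omega) (by omega)]
    omega

end StairPrefix

noncomputable def esymmCodeProd (n : ℕ) (y : Perm ℕ) : MvPolynomial ℕ ℤ :=
  ∏ i ∈ range n, esymmRange i (code y i)

theorem prod_Ico_eq_esymmCodeProd (n : ℕ) (y : Perm ℕ) :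
    ∏ i ∈ Ico 1 n, esymmRange i (code y i) = esymmCodeProd n y := by
  rcases Nat.eq_zero_or_pos n with rfl | hn
  · rfl
  · rw [esymmCodeProd, range_eq_Ico, prod_eq_prod_Ico_succ_bot hn, code, range_zero,
      filter_empty, card_empty, esymmRange_zero, one_mul]

theorem esymmCodeProd_eq_staircase {n : ℕ} {y : Perm ℕ} (h : ∀ j < n, code y j = j) :
    esymmCodeProd n y = ∏ i ∈ range n, X i ^ (n - 1 - i) := by
  rw [esymmCodeProd, prod_congr rfl fun i hi => by rw [h i (mem_range.1 hi), esymmRange_self]]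
  induction n with
  | zero => simp
  | succ n ih =>
    rw [prod_range_succ, ih fun j hj => h j (by omega), prod_range_succ, Nat.add_sub_cancel,
      Nat.sub_self, pow_zero, mul_one, ← prod_mul_distrib]
    refine prod_congr rfl fun i hi => ?_
    rw [← pow_succ]
    congr 1
    have := mem_range.1 hi
    omega

noncomputable def esymmCodeProdAway (n r : ℕ) (y : Perm ℕ) : MvPolynomial ℕ ℤ :=
  ∏ i ∈ ((range n).erase r).erase (r + 1), esymmRange i (code y i)

theorem esymmCodeProd_eq_of_code_eq {n r : ℕ} (hr : r + 1 < n) {y z : Perm ℕ}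
    (hz : ∀ i, i ≠ r → i ≠ r + 1 → code z i = code y i) :
    esymmCodeProd n z = esymmRange r (code z r) * esymmRange (r + 1) (code z (r + 1)) *
      esymmCodeProdAway n r y := by
  rw [esymmCodeProd, ← mul_prod_erase _ _ (mem_range.2 (by omega : r < n)),
    ← mul_prod_erase _ _ (mem_erase.2 ⟨by omega, mem_range.2 hr⟩), ← mul_assoc,
    esymmCodeProdAway]
  refine congrArg _ (prod_congr rfl fun i hi => ?_)
  rw [mem_erase, mem_erase] at hi
  rw [hz i hi.2.1 hi.1]

theorem rename_swap_esymmCodeProdAway (n r : ℕ) (y : Perm ℕ) :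
    rename (swap r (r + 1)) (esymmCodeProdAway n r y) = esymmCodeProdAway n r y := by
  rw [esymmCodeProdAway, map_prod]
  exact prod_congr rfl fun i hi => rename_esymmRange (map_swap_range (mem_erase.1 hi).1) _

theorem esymmRange_succ_self (r : ℕ) : esymmRange (r + 1) (r + 1) = esymmRange r r * X r := by
  rw [esymmRange_self, esymmRange_self, prod_range_succ]

namespace StairPrefix

variable {y : Perm ℕ} {r a n : ℕ}

theorem esymmCodeProd_mul_swap_sub_rename (h : StairPrefix y r a) (hr : r + 1 < n) :
    esymmCodeProd n (y * swap r (r + 1)) - rename (swap r (r + 1))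
        (esymmCodeProd n (y * swap r (r + 1)))
      = (X r - X (r + 1)) * (esymmRange r a * esymmRange r r * esymmCodeProdAway n r y) := by
  have hcode : ∀ i, i ≠ r → i ≠ r + 1 → code (y * swap r (r + 1)) i = code y i := by
    intro i hi hi1
    rcases (show i < r ∨ r + 2 ≤ i by omega) with hlt | hge
    · exact code_mul_of_forall_le_apply_eq fun k hk => swap_apply_of_ne_of_ne (by omega) (by omega)
    · exact code_mul_of_forall_ge_apply_eq fun k hk => swap_apply_of_ne_of_ne (by omega) (by omega)
  have hsymm : ∀ k, rename (swap r (r + 1)) (esymmRange r k) = esymmRange r k :=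
    rename_esymmRange (map_swap_range (by omega))
  rw [esymmCodeProd_eq_of_code_eq hr hcode, h.code_mul_swap_self, h.code_mul_swap_succ,
    esymmRange_succ_self, map_mul, map_mul, map_mul, hsymm, hsymm,
    rename_swap_esymmCodeProdAway, rename_X, swap_apply_left]
  ring

theorem esymmCodeProd_eq (h : StairPrefix y r a) (hr : r + 1 < n) :
    esymmCodeProd n y = esymmRange r r * esymmRange (r + 1) a * esymmCodeProdAway n r y := by
  rw [esymmCodeProd_eq_of_code_eq hr fun _ _ _ => rfl, h.code_of_le le_rfl, h.code_succ]

theorem esymmCodeProd_eq_add (h : StairPrefix y r a) (ha : 1 ≤ a) (hr : r + 1 < n) :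
    esymmCodeProd n y = esymmRange r a * esymmRange r r * esymmCodeProdAway n r y
      + esymmCodeProd n (y * swap r (r + 1) * swap (a - 1) r) := by
  have := h.le
  have hcode : ∀ i, i ≠ r → i ≠ r + 1 →
      code (y * swap r (r + 1) * swap (a - 1) r) i = code y i := by
    intro i hi hi1
    rcases (show i < r ∨ r + 2 ≤ i by omega) with hlt | hge
    · rw [h.code_mul_swap_mul_swap_of_lt ha hlt, h.code_of_le hlt.le]
    · rw [mul_assoc]
      refine code_mul_of_forall_ge_apply_eq fun k hk => ?_
      rw [Perm.mul_apply, swap_apply_of_ne_of_ne (by omega : k ≠ a - 1) (by omega : k ≠ r),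
        swap_apply_of_ne_of_ne (by omega : k ≠ r) (by omega : k ≠ r + 1)]
  have hsucc := esymmRange_succ r (a - 1)
  rw [Nat.sub_add_cancel ha] at hsucc
  rw [h.esymmCodeProd_eq hr, esymmCodeProd_eq_of_code_eq hr hcode,
    h.code_mul_swap_mul_swap_self ha, h.code_mul_swap_mul_swap_succ ha, esymmRange_succ_self,
    hsucc]
  ring

theorem esymmCodeProd_eq_of_zero (h : StairPrefix y r 0) (hr : r + 1 < n) :
    esymmCodeProd n y = esymmRange r 0 * esymmRange r r * esymmCodeProdAway n r y := by
  rw [h.esymmCodeProd_eq hr, esymmRange_zero, esymmRange_zero]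
  ring

end StairPrefix

section Expansion

variable {n : ℕ}

def IsUnitriangularRow (w : Perm (Fin n)) (m : Perm (Fin n) → ℤ) : Prop :=
  m w = 1 ∧ ∀ u, m u ≠ 0 → u = w ∨ LexGT (extN u⁻¹) (extN w⁻¹)

theorem isUnitriangularRow_single (w : Perm (Fin n)) : IsUnitriangularRow w (Pi.single w 1) :=
  ⟨Pi.single_eq_same w 1, fun _ hu => .inl (by_contra fun h => hu (Pi.single_eq_of_ne h 1))⟩

theorem IsUnitriangularRow.add {w w' : Perm (Fin n)} {m m' : Perm (Fin n) → ℤ}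
    (hm : IsUnitriangularRow w m) (hm' : IsUnitriangularRow w' m')
    (hlt : LexGT (extN w'⁻¹) (extN w⁻¹)) : IsUnitriangularRow w (m + m') := by
  have hgt : ∀ u, m' u ≠ 0 → LexGT (extN u⁻¹) (extN w⁻¹) := fun u hu =>
    (hm'.2 u hu).elim (fun h => h ▸ hlt) (fun h => lexGT_trans h hlt)
  refine ⟨?_, fun u hu => ?_⟩
  · have : m' w = 0 := by_contra fun h => lexGT_irrefl _ (hgt w h)
    rw [Pi.add_apply, hm.1, this, add_zero]
  · by_cases hmu : m u = 0
    · exact .inr (hgt u (by simpa [hmu] using hu))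
    · exact hm.2 u hmu

theorem swap_mul_extN_inv_mul_adjSwap (u : Perm (Fin n)) {r : ℕ} (hr : r + 1 < n) :
    swap r (r + 1) * extN (u * adjSwap hr)⁻¹ = extN u⁻¹ := by
  rw [extN_inv, extN_inv, extN_mul, extN_adjSwap, mul_inv_rev, swap_inv, ← mul_assoc,
    swap_mul_self, one_mul]

theorem IsUnitriangularRow.coeffDiff {w : Perm (Fin n)} {r : ℕ} {hr : r + 1 < n}
    {m : Perm (Fin n) → ℤ} (hm : IsUnitriangularRow (w * adjSwap hr) m)
    (hasc : extN w r < extN w (r + 1)) : IsUnitriangularRow w (coeffDiff hr m) := by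
  refine ⟨by rw [_root_.coeffDiff, if_pos hasc, hm.1], fun x hx => ?_⟩
  unfold _root_.coeffDiff at hx
  split_ifs at hx with hxasc
  · rcases hm.2 _ hx with h | h
    · exact .inl (mul_right_cancel h)
    · have hdesc : (extN (w * adjSwap hr)⁻¹)⁻¹ (r + 1) < (extN (w * adjSwap hr)⁻¹)⁻¹ r := by
        rwa [extN_inv, inv_inv, extN_mul_adjSwap_apply_left, extN_mul_adjSwap_apply_right]
      have := lexGT_swap_mul hdesc h
      rw [swap_mul_extN_inv_mul_adjSwap, swap_mul_extN_inv_mul_adjSwap] at this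
      exact .inr this
  · exact absurd rfl hx

variable {S : Perm ℕ → MvPolynomial ℕ ℤ}

theorem HasDividedDifferences.exists_unitriangular_expansion (hS : HasDividedDifferences S)
    (hw₀ : S (extN (Fin.revPerm : Perm (Fin n))) = ∏ i ∈ range n, X i ^ (n - 1 - i))
    (w : Perm (Fin n)) :
    ∃ m, esymmCodeProd n (extN w) = ∑ u, m u • S (extN u) ∧ IsUnitriangularRow w m := by
  induction w using wellFounded_lexGT_extN_inv.induction with
  | _ w ih =>
  by_cases hdom : ∀ j < n, code (extN w) j = j
  · refine ⟨Pi.single w 1, ?_, isUnitriangularRow_single w⟩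
    rw [esymmCodeProd_eq_staircase hdom, ← hw₀, ← eq_revPerm_of_code_eq_self hdom]
    simp [Pi.single_apply]
  push Not at hdom
  obtain ⟨r, a, hr, h⟩ := exists_stairPrefix hdom
  have hv : extN (w * adjSwap hr) = extN w * swap r (r + 1) := by rw [extN_mul, extN_adjSwap]
  obtain ⟨mv, hmv, htv⟩ := ih (w * adjSwap hr) <| by
    rw [extN_inv, extN_inv, hv]
    exact h.lexGT_mul_swap
  have hB := hS.sum_coeffDiff_eq hr hmv (hv ▸ h.esymmCodeProd_mul_swap_sub_rename hr)
  have htB := htv.coeffDiff h.apply_lt_apply_succ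
  rcases Nat.eq_zero_or_pos a with rfl | ha
  · exact ⟨coeffDiff hr mv, by rw [h.esymmCodeProd_eq_of_zero hr, hB], htB⟩
  have := h.le
  set w₂ := w * adjSwap hr * swap ⟨a - 1, by omega⟩ ⟨r, by omega⟩
  have hw₂ : extN w₂ = extN w * swap r (r + 1) * swap (a - 1) r := by
    rw [extN_mul, hv, extN_swap]
  have hlt : LexGT (extN w₂⁻¹) (extN w⁻¹) := by
    rw [extN_inv, extN_inv, hw₂]
    exact h.lexGT_mul_swap_mul_swap ha
  obtain ⟨m₂, hm₂, ht₂⟩ := ih w₂ hlt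
  refine ⟨coeffDiff hr mv + m₂, ?_, htB.add ht₂ hlt⟩
  rw [h.esymmCodeProd_eq_add ha hr, ← hB, ← hw₂, hm₂, ← sum_add_distrib]
  simp only [Pi.add_apply, add_smul]

end Expansion

/-- In `Π_{2≤i≤n} e_{l_i(w)}(x₁,…,x_{i−1}) = Σ_u n_{wu} 𝔖_u`, we have
`n_{ww} = 1`, and `n_{wu} ≠ 0` implies `w⁻¹ ≤_lex u⁻¹`. -/
theorem stmt13 (n : ℕ) (S : Equiv.Perm ℕ → MvPolynomial ℕ ℤ)
    (hdom : ∀ (v : Equiv.Perm ℕ) (m : ℕ), (∀ i, m ≤ i → v i = i) →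
      (∀ i j, i < j → j < m → v j < v i) →
      S v = ∏ i ∈ Finset.range m, X i ^ (v i))
    (hrec : ∀ (v : Equiv.Perm ℕ) (i : ℕ), FinSupp v →
      ell (v * Equiv.swap i (i + 1)) < ell v →
      (X i - X (i + 1)) * S (v * Equiv.swap i (i + 1))
        = S v - rename (⇑(Equiv.swap i (i + 1))) (S v))
    (w : Equiv.Perm (Fin n)) (c : Equiv.Perm (Fin n) → ℤ)
    (hc : ∏ i ∈ Finset.Ico 1 n, esymmRange i (code (extN w) i)
      = ∑ u : Equiv.Perm (Fin n), c u • S (extN u)) :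
    c w = 1 ∧ ∀ u : Equiv.Perm (Fin n), c u ≠ 0 →
      u = w ∨ LexGT (extN u⁻¹) (extN w⁻¹) := by
  have hS1 : S 1 = 1 := by simpa using hdom 1 0 (fun _ _ => rfl) (fun _ _ _ _ => by omega)
  have hw₀ : S (extN (Fin.revPerm : Perm (Fin n))) = ∏ i ∈ range n, X i ^ (n - 1 - i) := by
    rw [hdom _ n (fun _ => extN_apply_of_le _) fun i j hij hj => by
      rw [extN_revPerm_apply hj, extN_revPerm_apply (hij.trans hj)]; omega]
    exact prod_congr rfl fun i hi => by rw [extN_revPerm_apply (mem_range.1 hi)]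
  obtain ⟨m, hm, htri⟩ := HasDividedDifferences.exists_unitriangular_expansion hrec hw₀ w
  have hcm : c = m := funext <| Fintype.linearIndependent_iffₛ.1
    (linearIndependent_extN hS1 hrec) c m (by rw [← hc, ← hm, prod_Ico_eq_esymmCodeProd])
  exact hcm ▸ htri
end
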